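/- Let Λ be a countable group and let s ∈ Λ be an element of infinite order. Then for any finite family U_1, …, U_n of pairwise disjoint nonempty proper clopen subsets of the Cantor set X, there exists an action α : Λ → Homeo(X) such that α_s(U_i) = U_{i+1} for all 1 ≤ i ≤ n, where U_{n+1} := U_1. -/

import Mathlib

open TopologicalSpace

/-- The group structure on the homeomorphism group of `X`,
with `(f * g) x = f (g x)`. -/
instance homeoGroup (X : Type*) [TopologicalSpace X] : Group (X ≃ₜ X) where
  mul f g := g.trans f
  one := Homeomorph.refl X
  inv := Homeomorph.symm
  mul_assoc _ _ _ := Homeomorph.ext fun _ => rfl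
  one_mul _ := Homeomorph.ext fun _ => rfl
  mul_one _ := Homeomorph.ext fun _ => rfl
  inv_mul_cancel f := Homeomorph.ext fun x => f.symm_apply_apply x

/-- The topology on `Homeo(X)` of uniform convergence of a homeomorphism together with
its inverse: for a compact metrizable space `X` the compact-open topology on `C(X, X)`
is the topology of uniform convergence, and we pull back the product topology along
`φ ↦ (φ, φ⁻¹)`. -/
instance homeoTopology (X : Type*) [TopologicalSpace X] : TopologicalSpace (X ≃ₜ X) :=
  TopologicalSpace.induced
    (fun φ : X ≃ₜ X => ((φ : C(X, X)), (φ.symm : C(X, X)))) inferInstance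

/-- The space `S(Γ, X)` of actions of `Γ` on `X`, topologized as a subspace of
the product space `∏_Γ Homeo(X)`. -/
instance actionSpaceTopology (Γ X : Type*) [Group Γ] [TopologicalSpace X] :
    TopologicalSpace (Γ →* (X ≃ₜ X)) :=
  TopologicalSpace.induced (fun α : Γ →* (X ≃ₜ X) => (α : Γ → X ≃ₜ X)) inferInstance

/-!
A nonempty compact metrizable totally disconnected perfect space `X` is homeomorphic to the Cantor
space `ℕ → Bool` (Brouwer). To see this, cut `X` in two clopen halves, and each half again, and so
on. A piece `A` is cut along one member of a minimal cover of `A` by clopen sets of diameter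
`≤ 1/k`, where `k` is the least index for which such a cover needs two sets. Each half needs fewer
sets at that index and the index never decreases, so along every branch the index tends to
infinity and the pieces shrink to points.

For the action, let `Z ⊆ (Λ → ℤ/n)` be the closed set of labelings with `x (s g) = x g + 1`; it is
metrizable because `Λ` is countable, and nonempty because `s` has infinite order. `Λ` acts on `Z`
by right translation, and `s` adds one to the label `x 1`. The pieces `{x 1 = i} × X` of `Z × X`
satisfy the hypotheses of Brouwer's theorem (the factor `X` makes them perfect), so each is
homeomorphic to `U i`. Gluing these homeomorphisms with the identity on the complement of
`⋃ i, U i` carries the action of `Λ` on `(Z × X) ⊕ (⋃ i, U i)ᶜ` over to `X`.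
-/

open Set Function Topology Metric
open scoped ENNReal

section Perfect

variable {X : Type*} [TopologicalSpace X] [PerfectSpace X]

theorem IsOpen.nontrivial_of_perfectSpace {A : Set X} (hA : IsOpen A) (hne : A.Nonempty) :
    A.Nontrivial := by
  obtain ⟨x, hx⟩ := hne
  obtain ⟨y, ⟨hyA, -⟩, hyx⟩ :=
    preperfect_iff_nhds.1 PerfectSpace.univ_preperfect x trivial A (hA.mem_nhds hx)
  exact ⟨y, hyA, x, hx, hyx⟩

theorem IsOpen.perfectSpace {A : Set X} (hA : IsOpen A) : PerfectSpace A := by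
  refine ⟨preperfect_iff_nhds.2 fun x _ V hV => ?_⟩
  have hV' : Subtype.val '' V ∈ 𝓝 (x : X) := by
    rw [← hA.isOpenEmbedding_subtypeVal.map_nhds_eq]
    exact Filter.image_mem_map hV
  obtain ⟨_, ⟨⟨y, hyV, rfl⟩, -⟩, hyx⟩ :=
    preperfect_iff_nhds.1 (PerfectSpace.univ_preperfect (α := X)) x trivial _ hV'
  exact ⟨y, ⟨hyV, trivial⟩, fun h => hyx (congrArg Subtype.val h)⟩

instance {Y : Type*} [TopologicalSpace Y] : PerfectSpace (Y × X) := by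
  refine ⟨preperfect_iff_nhds.2 fun p _ V hV => ?_⟩
  obtain ⟨u, hu, v, hv, huv⟩ := mem_nhds_prod_iff.1 hV
  obtain ⟨x, ⟨hxv, -⟩, hx⟩ :=
    preperfect_iff_nhds.1 PerfectSpace.univ_preperfect p.2 trivial v hv
  exact ⟨(p.1, x), ⟨huv ⟨mem_of_mem_nhds hu, hxv⟩, trivial⟩, fun h => hx (congrArg Prod.snd h)⟩

end Perfect

section ClopenCover

variable {X : Type*} [EMetricSpace X]

def IsSmallClopenCover (ε : ℝ≥0∞) (A : Set X) (𝒟 : Finset (Set X)) : Prop :=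
  (∀ D ∈ 𝒟, IsClopen D ∧ ediam D ≤ ε) ∧ A ⊆ ⋃₀ (𝒟 : Set (Set X))

noncomputable def clopenCoveringNumber (ε : ℝ≥0∞) (A : Set X) : ℕ :=
  sInf (Finset.card '' {𝒟 | IsSmallClopenCover ε A 𝒟})

variable {ε : ℝ≥0∞} {A A' : Set X}

theorem clopenCoveringNumber_le {𝒟 : Finset (Set X)} (h𝒟 : IsSmallClopenCover ε A 𝒟) :
    clopenCoveringNumber ε A ≤ 𝒟.card :=
  Nat.sInf_le (mem_image_of_mem _ h𝒟)

variable [CompactSpace X] [TotallyDisconnectedSpace X]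

theorem exists_isSmallClopenCover_univ (hε : 0 < ε) :
    ∃ 𝒟 : Finset (Set X), IsSmallClopenCover ε univ 𝒟 := by
  choose V hV hxV hVball using fun x : X =>
    compact_exists_isClopen_in_isOpen (isOpen_eball (x := x))
      (mem_eball_self (ENNReal.half_pos hε.ne'))
  obtain ⟨t, ht⟩ :=
    isCompact_univ.elim_nhds_subcover V fun x _ => (hV x).isOpen.mem_nhds (hxV x)
  refine ⟨t.image V, ?_, ?_⟩
  · simp only [Finset.mem_image]
    rintro _ ⟨x, -, rfl⟩
    refine ⟨hV x, (ediam_mono (hVball x)).trans (ediam_eball_le.trans_eq ?_)⟩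
    exact ENNReal.mul_div_cancel two_ne_zero ENNReal.ofNat_ne_top
  · simpa only [Finset.coe_image, sUnion_image, Finset.mem_coe] using ht.2

theorem exists_isSmallClopenCover_card_eq (hε : 0 < ε) (A : Set X) :
    ∃ 𝒟, IsSmallClopenCover ε A 𝒟 ∧ 𝒟.card = clopenCoveringNumber ε A := by
  obtain ⟨𝒟, h𝒟, hcov⟩ := exists_isSmallClopenCover_univ (X := X) hε
  exact Nat.sInf_mem (s := Finset.card '' {𝒟 | IsSmallClopenCover ε A 𝒟})
    ⟨_, mem_image_of_mem _ ⟨h𝒟, (subset_univ A).trans hcov⟩⟩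

theorem clopenCoveringNumber_mono (hε : 0 < ε) (h : A' ⊆ A) :
    clopenCoveringNumber ε A' ≤ clopenCoveringNumber ε A := by
  obtain ⟨𝒟, ⟨h𝒟, hA⟩, hcard⟩ := exists_isSmallClopenCover_card_eq hε A
  exact hcard ▸ clopenCoveringNumber_le ⟨h𝒟, h.trans hA⟩

theorem ediam_le_of_clopenCoveringNumber_le_one (hε : 0 < ε)
    (h : clopenCoveringNumber ε A ≤ 1) : ediam A ≤ ε := by
  obtain ⟨𝒟, ⟨h𝒟, hA⟩, hcard⟩ := exists_isSmallClopenCover_card_eq hε A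
  refine ediam_le fun x hx y hy => ?_
  obtain ⟨D, hD, hxD⟩ := hA hx
  obtain ⟨E, hE, hyE⟩ := hA hy
  obtain rfl := Finset.card_le_one.1 (hcard ▸ h) D hD E hE
  exact edist_le_of_ediam_le hxD hyE (h𝒟 D hD).2

theorem exists_isClopen_clopenCoveringNumber_inter_lt (hε : 0 < ε)
    (h : 2 ≤ clopenCoveringNumber ε A) :
    ∃ D : Set X, IsClopen D ∧ clopenCoveringNumber ε (A ∩ D) < clopenCoveringNumber ε A ∧
      clopenCoveringNumber ε (A \ D) < clopenCoveringNumber ε A := by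
  obtain ⟨𝒟, ⟨h𝒟, hA⟩, hcard⟩ := exists_isSmallClopenCover_card_eq hε A
  obtain ⟨D, hD⟩ : 𝒟.Nonempty := Finset.card_pos.1 (by omega)
  refine ⟨D, (h𝒟 D hD).1, ?_, ?_⟩
  · calc clopenCoveringNumber ε (A ∩ D) ≤ ({D} : Finset (Set X)).card :=
          clopenCoveringNumber_le ⟨by simpa using h𝒟 D hD, by simp⟩
      _ < _ := by rw [Finset.card_singleton]; omega
  · calc clopenCoveringNumber ε (A \ D) ≤ (𝒟.erase D).card := by
          refine clopenCoveringNumber_le ⟨fun E hE => h𝒟 E (Finset.mem_of_mem_erase hE), ?_⟩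
          rintro x ⟨hxA, hxD⟩
          obtain ⟨E, hE, hxE⟩ := hA hxA
          exact ⟨E, Finset.mem_erase.2 ⟨fun h => hxD (h ▸ hxE), hE⟩, hxE⟩
      _ < _ := by rw [Finset.card_erase_of_mem hD]; omega

end ClopenCover

theorem exists_le_of_lex_descent {lv : ℕ → ℕ} {c : ℕ → ℕ → ℕ}
    (hmono : ∀ t, lv t ≤ lv (t + 1)) (hdec : ∀ t, c (lv t) (t + 1) < c (lv t) t) (K : ℕ) :
    ∃ t, K ≤ lv t := by
  have level_increases : ∀ m t, c (lv t) t ≤ m → ∃ t', lv t < lv t' := by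
    intro m
    induction m with
    | zero => exact fun t ht => absurd (hdec t) (by omega)
    | succ m ih =>
      intro t ht
      rcases (hmono t).lt_or_eq with hlt | heq
      · exact ⟨t + 1, hlt⟩
      · obtain ⟨t', ht'⟩ := ih (t + 1) (by have := hdec t; rw [← heq]; omega)
        exact ⟨t', heq ▸ ht'⟩
  induction K with
  | zero => exact ⟨0, Nat.zero_le _⟩
  | succ K ih =>
    obtain ⟨t, ht⟩ := ih
    obtain ⟨t', ht'⟩ := level_increases _ t le_rfl
    exact ⟨t', by omega⟩

namespace Brouwer

variable {X : Type*} [EMetricSpace X] {A A' : Set X} {k : ℕ}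

theorem inv_natCast_pos (k : ℕ) : 0 < (k : ℝ≥0∞)⁻¹ :=
  ENNReal.inv_pos.2 (ENNReal.natCast_ne_top k)

noncomputable def coverCount (k : ℕ) (A : Set X) : ℕ :=
  clopenCoveringNumber (k : ℝ≥0∞)⁻¹ A

noncomputable def splitLevel (A : Set X) : ℕ :=
  sInf {k | 2 ≤ coverCount k A}

theorem coverCount_le_one_of_lt_splitLevel (hk : k < splitLevel A) : coverCount k A ≤ 1 := by
  have := Nat.notMem_of_lt_sInf hk
  simp only [mem_ofPred_eq, not_le] at this
  omega

variable [CompactSpace X] [TotallyDisconnectedSpace X]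

theorem coverCount_mono (h : A' ⊆ A) : coverCount k A' ≤ coverCount k A :=
  clopenCoveringNumber_mono (inv_natCast_pos k) h

theorem ediam_le_of_coverCount_le_one (h : coverCount k A ≤ 1) : ediam A ≤ (k : ℝ≥0∞)⁻¹ :=
  ediam_le_of_clopenCoveringNumber_le_one (inv_natCast_pos k) h

theorem ediam_le_of_lt_splitLevel (hk : k < splitLevel A) : ediam A ≤ (k : ℝ≥0∞)⁻¹ :=
  ediam_le_of_coverCount_le_one (coverCount_le_one_of_lt_splitLevel hk)

theorem two_le_coverCount_splitLevel (hA : A.Nontrivial) : 2 ≤ coverCount (splitLevel A) A := by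
  obtain ⟨x, hx, y, hy, hxy⟩ := hA
  obtain ⟨k, hk⟩ := ENNReal.exists_inv_nat_lt (edist_pos.2 hxy).ne'
  refine Nat.sInf_mem (s := {k | 2 ≤ coverCount k A}) ⟨k, ?_⟩
  by_contra h
  have := ediam_le_of_coverCount_le_one (Nat.le_of_lt_succ (not_le.1 h))
  exact (edist_le_of_ediam_le hx hy this).not_gt hk

theorem splitLevel_mono (h : A' ⊆ A) (hA' : A'.Nontrivial) : splitLevel A ≤ splitLevel A' := by
  by_contra hlt
  have := coverCount_le_one_of_lt_splitLevel (not_le.1 hlt)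
  have := coverCount_mono (k := splitLevel A') h
  have := two_le_coverCount_splitLevel hA'
  omega

theorem exists_cutter (A : Set X) : ∃ D : Set X, IsClopen D ∧ (A.Nontrivial →
    coverCount (splitLevel A) (A ∩ D) < coverCount (splitLevel A) A ∧
      coverCount (splitLevel A) (A \ D) < coverCount (splitLevel A) A) := by
  by_cases hA : A.Nontrivial
  · obtain ⟨D, hD, hlt⟩ := exists_isClopen_clopenCoveringNumber_inter_lt (inv_natCast_pos _)
      (two_le_coverCount_splitLevel hA)
    exact ⟨D, hD, fun _ => hlt⟩
  · exact ⟨∅, isClopen_empty, fun h => absurd h hA⟩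

noncomputable def cutter (A : Set X) : Set X := (exists_cutter A).choose

noncomputable def half (A : Set X) : Bool → Set X
  | false => A ∩ cutter A
  | true => A \ cutter A

theorem half_subset (A : Set X) : ∀ b, half A b ⊆ A
  | false => inter_subset_left
  | true => sdiff_subset

theorem isClopen_half (hA : IsClopen A) : ∀ b, IsClopen (half A b)
  | false => hA.inter (exists_cutter A).choose_spec.1
  | true => hA.diff (exists_cutter A).choose_spec.1

theorem disjoint_half (A : Set X) : Disjoint (half A false) (half A true) :=
  disjoint_sdiff_inter.symm

open Classical in
theorem mem_half {p : X} (hp : p ∈ A) : p ∈ half A (decide (p ∉ cutter A)) := by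
  by_cases h : p ∈ cutter A <;> simp [half, h, hp]

theorem coverCount_half_lt (hA : A.Nontrivial) :
    ∀ b, coverCount (splitLevel A) (half A b) < coverCount (splitLevel A) A
  | false => ((exists_cutter A).choose_spec.2 hA).1
  | true => ((exists_cutter A).choose_spec.2 hA).2

theorem half_nonempty (hA : A.Nontrivial) (b : Bool) : (half A b).Nonempty := by
  have hlt := coverCount_half_lt hA
  rw [nonempty_iff_ne_empty]
  intro h
  cases b
  · have : half A true = A := sdiff_eq_left.2 (disjoint_iff_inter_eq_empty.2 h)
    exact (hlt true).ne (congrArg _ this)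
  · have : half A false = A := inter_eq_left.2 (sdiff_eq_empty.1 h)
    exact (hlt false).ne (congrArg _ this)

/-- Indexed like `PiNat.res`: the last choice is the head of the list. -/
noncomputable def scheme : List Bool → Set X
  | [] => univ
  | b :: l => half (scheme l) b

theorem isClopen_scheme : ∀ l : List Bool, IsClopen (scheme (X := X) l)
  | [] => isClopen_univ
  | b :: l => isClopen_half (isClopen_scheme l) b

theorem disjoint_scheme : CantorScheme.Disjoint (scheme (X := X)) := by
  rintro l (_ | _) (_ | _) hab
  exacts [absurd rfl hab, disjoint_half _, (disjoint_half _).symm, absurd rfl hab]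

open Classical in
noncomputable def branch (p : X) : ℕ → List Bool
  | 0 => []
  | t + 1 => decide (p ∉ cutter (scheme (branch p t))) :: branch p t

open Classical in
noncomputable def address (p : X) (t : ℕ) : Bool :=
  decide (p ∉ cutter (scheme (branch p t)))

theorem res_address (p : X) : ∀ t, PiNat.res (address p) t = branch p t
  | 0 => rfl
  | t + 1 => congrArg (address p t :: ·) (res_address p t)

theorem mem_scheme_branch (p : X) : ∀ t, p ∈ scheme (branch p t)
  | 0 => mem_univ p
  | t + 1 => mem_half (mem_scheme_branch p t)

variable [PerfectSpace X] [Nonempty X]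

theorem nontrivial_scheme : ∀ l : List Bool, (scheme (X := X) l).Nontrivial
  | [] => isOpen_univ.nontrivial_of_perfectSpace univ_nonempty
  | b :: l => (isClopen_scheme (b :: l)).isOpen.nontrivial_of_perfectSpace
      (half_nonempty (nontrivial_scheme l) b)

end Brouwer

theorem Brouwer.vanishingDiam_scheme {X : Type*} [MetricSpace X] [CompactSpace X]
    [TotallyDisconnectedSpace X] [PerfectSpace X] [Nonempty X] :
    CantorScheme.VanishingDiam (scheme (X := X)) := by
  intro x
  set A : ℕ → Set X := fun t => scheme (PiNat.res x t)
  have hA : ∀ t, A (t + 1) = half (A t) (x t) := fun t => rfl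
  have hmono : ∀ t, splitLevel (A t) ≤ splitLevel (A (t + 1)) := fun t =>
    splitLevel_mono (hA t ▸ half_subset _ _) (nontrivial_scheme _)
  have hunbounded := exists_le_of_lex_descent hmono (c := fun k t => coverCount k (A t))
    fun t => hA t ▸ coverCount_half_lt (nontrivial_scheme _) _
  rw [ENNReal.tendsto_atTop_zero]
  intro ε hε
  obtain ⟨k, hk⟩ := ENNReal.exists_inv_nat_lt hε.ne'
  obtain ⟨t, ht⟩ := hunbounded (k + 1)
  refine ⟨t, fun t' ht' => (ediam_le_of_lt_splitLevel ?_).trans hk.le⟩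
  exact (monotone_nat_of_le_succ hmono ht').trans_lt' ht

open CantorScheme in
theorem nonempty_homeomorph_cantorSpace (X : Type*) [TopologicalSpace X] [CompactSpace X]
    [MetrizableSpace X] [TotallyDisconnectedSpace X] [PerfectSpace X] [Nonempty X] :
    Nonempty ((ℕ → Bool) ≃ₜ X) := by
  let := metrizableSpaceMetric X
  have hdiam := Brouwer.vanishingDiam_scheme (X := X)
  have hdom : (inducedMap Brouwer.scheme).1 = univ :=
    ClosureAntitone.map_of_vanishingDiam hdiam
      (CantorScheme.Antitone.closureAntitone (fun l b => Brouwer.half_subset _ b)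
        fun l => (Brouwer.isClopen_scheme l).isClosed)
      fun l => (Brouwer.nontrivial_scheme l).nonempty
  let f : (ℕ → Bool) → X := fun x => (inducedMap Brouwer.scheme).2 ⟨x, hdom ▸ mem_univ x⟩
  have hinj : f.Injective := fun x y hxy =>
    congrArg Subtype.val (Brouwer.disjoint_scheme.map_injective hxy)
  have hsurj : f.Surjective := by
    refine fun p => ⟨Brouwer.address p, eq_of_forall_dist_le fun ε hε => ?_⟩
    obtain ⟨t, ht⟩ := hdiam.dist_lt ε hε (Brouwer.address p)
    refine (ht _ (map_mem _ t) p ?_).le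
    rw [Brouwer.res_address]
    exact Brouwer.mem_scheme_branch p t
  exact ⟨Continuous.homeoOfEquivCompactToT2 (f := Equiv.ofBijective f ⟨hinj, hsurj⟩)
    (hdiam.map_continuous.comp (continuous_id.subtype_mk _))⟩

theorem Function.Semiconj.image_preimage_singleton {α β : Type*} {f : α → α} {p : α → β}
    {σ : β → β} (h : Semiconj p f σ) (hf : f.Surjective) (hσ : σ.Injective) (b : β) :
    f '' (p ⁻¹' {b}) = p ⁻¹' {σ b} := by
  ext y
  obtain ⟨x, rfl⟩ := hf y
  refine ⟨?_, fun hx => ⟨x, hσ (h x ▸ hx), rfl⟩⟩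
  rintro ⟨x', rfl, hx'⟩
  rw [mem_preimage, ← hx', h x', mem_singleton_iff]

section Homeomorph

variable {ι X Y : Type*} [TopologicalSpace X] [TopologicalSpace Y]

theorem exists_homeomorph_comp_eq [Finite ι] [CompactSpace X] [T2Space X] [T2Space Y]
    {p : X → ι} {q : Y → ι} (hp : ∀ i, IsClosed (p ⁻¹' {i})) (e : ∀ i, p ⁻¹' {i} ≃ₜ q ⁻¹' {i}) :
    ∃ Φ : X ≃ₜ Y, q ∘ Φ = p := by
  have : ∀ i, CompactSpace (p ⁻¹' {i}) := fun i => isCompact_iff_compactSpace.1 (hp i).isCompact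
  let σp : (Σ i, p ⁻¹' {i}) ≃ₜ X :=
    (continuous_sigma fun i => continuous_subtype_val).homeoOfEquivCompactToT2
      (f := Equiv.sigmaFiberEquiv p)
  let σq : (Σ i, p ⁻¹' {i}) ≃ₜ Y :=
    (continuous_sigma fun i => continuous_subtype_val.comp (e i).continuous).homeoOfEquivCompactToT2
      (f := (Equiv.sigmaCongrRight fun i => (e i).toEquiv).trans (Equiv.sigmaFiberEquiv q))
  refine ⟨σp.symm.trans σq, funext fun x => ?_⟩
  obtain ⟨⟨i, a⟩, rfl⟩ := σp.surjective x
  simp only [comp_apply, Homeomorph.trans_apply, Homeomorph.symm_apply_apply]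
  exact ((e i a).2 : _).trans (a.2 : p a = i).symm

def Homeomorph.conjHom (Φ : X ≃ₜ Y) : (Y ≃ₜ Y) →* (X ≃ₜ X) where
  toFun f := Φ.trans (f.trans Φ.symm)
  map_one' := Homeomorph.ext Φ.symm_apply_apply
  map_mul' f g := Homeomorph.ext fun x => by
    simp only [Homeomorph.trans_apply]
    exact congrArg Φ.symm (congrArg f (Φ.apply_symm_apply _).symm)

theorem Homeomorph.semiconj_conjHom {Φ : X ≃ₜ Y} {p : X → ι} {q : Y → ι} (hΦ : q ∘ Φ = p)
    {f : Y ≃ₜ Y} {σ : ι → ι} (hf : Semiconj q f σ) : Semiconj p (Φ.conjHom f) σ := fun x => by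
  subst hΦ
  simp only [conjHom, MonoidHom.coe_mk, OneHom.coe_mk, comp_apply, trans_apply, apply_symm_apply]
  exact hf _

end Homeomorph

section PieceIndex

variable {ι X : Type*} {U : ι → Set X}

open Classical in
noncomputable def pieceIndex (U : ι → Set X) (x : X) : Option ι :=
  if h : ∃ i, x ∈ U i then some h.choose else none

theorem preimage_pieceIndex_some (hdisj : Pairwise (Disjoint on U)) (i : ι) :
    pieceIndex U ⁻¹' {some i} = U i := by
  ext x
  simp only [mem_preimage, mem_singleton_iff, pieceIndex]
  split_ifs with h
  · refine ⟨fun hi => Option.some_injective _ hi ▸ h.choose_spec, fun hx => ?_⟩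
    by_contra hne
    exact (hdisj (fun h' => hne (congrArg some h'))).le_bot ⟨h.choose_spec, hx⟩
  · exact ⟨fun h' => h'.elim, fun hx => (h ⟨i, hx⟩).elim⟩

theorem preimage_pieceIndex_none : pieceIndex U ⁻¹' {none} = (⋃ i, U i)ᶜ := by
  ext x
  simp [pieceIndex]

theorem isClopen_preimage_pieceIndex [TopologicalSpace X] [Finite ι] (hU : ∀ i, IsClopen (U i))
    (hdisj : Pairwise (Disjoint on U)) : ∀ o, IsClopen (pieceIndex U ⁻¹' {o})
  | none => preimage_pieceIndex_none ▸ (isClopen_iUnion_of_finite hU).compl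
  | some i => preimage_pieceIndex_some hdisj i ▸ hU i

end PieceIndex

/-- `k g` is the exponent in `g = s ^ k g * r`, where `r` represents the coset `⟨s⟩ g`. -/
theorem exists_int_cocycle {Λ : Type*} [Group Λ] {s : Λ} (hs : ¬IsOfFinOrder s) :
    ∃ k : Λ → ℤ, ∀ g, k (s * g) = k g + 1 := by
  let r := QuotientGroup.rightRel (Subgroup.zpowers s)
  have hrep : ∀ g : Λ, ∃ k : ℤ, s ^ k * (Quotient.mk r g).out = g := fun g => by
    obtain ⟨k, hk⟩ := Subgroup.mem_zpowers_iff.1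
      (QuotientGroup.rightRel_apply.1 (Quotient.mk_out (s := r) g))
    exact ⟨k, by rw [hk, inv_mul_cancel_right]⟩
  choose k hk using hrep
  refine ⟨k, fun g => injective_zpow_iff_not_isOfFinOrder.2 hs
    (mul_right_cancel (b := (Quotient.mk r g).out) ?_)⟩
  have hcoset : Quotient.mk r (s * g) = Quotient.mk r g :=
    Quotient.sound (QuotientGroup.rightRel_apply.2 (by simp [Subgroup.mem_zpowers]))
  dsimp only
  rw [← hcoset, hk, hcoset, add_comm, zpow_one_add, mul_assoc, hk]

section Model

variable {Λ : Type*} [Group Λ] (s : Λ) (n : ℕ) [NeZero n]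

def cyclicLabelings : Set (Λ → Fin n) := {x | ∀ g, x (s * g) = x g + 1}

theorem isClosed_cyclicLabelings : IsClosed (cyclicLabelings s n) := by
  simp only [cyclicLabelings, ofPred_forall]
  exact isClosed_iInter fun g => isClosed_eq (continuous_apply _)
    ((continuous_of_discreteTopology (f := (· + 1 : Fin n → Fin n))).comp (continuous_apply g))

instance : CompactSpace (cyclicLabelings s n) :=
  isCompact_iff_compactSpace.1 (isClosed_cyclicLabelings s n).isCompact

theorem comp_mul_right_mem_cyclicLabelings {x : Λ → Fin n} (hx : x ∈ cyclicLabelings s n)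
    (g : Λ) : (fun h => x (h * g)) ∈ cyclicLabelings s n := fun h => by
  simpa only [mul_assoc] using hx (h * g)

def labelingShiftMap (g : Λ) (x : cyclicLabelings s n) : cyclicLabelings s n :=
  ⟨fun h => x.1 (h * g), comp_mul_right_mem_cyclicLabelings s n x.2 g⟩

theorem continuous_labelingShiftMap (g : Λ) : Continuous (labelingShiftMap s n g) := by
  refine Continuous.subtype_mk ?_ _
  exact continuous_pi fun h => (continuous_apply (h * g)).comp continuous_subtype_val

def labelingShift : Λ →* (cyclicLabelings s n ≃ₜ cyclicLabelings s n) where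
  toFun g :=
    { toFun := labelingShiftMap s n g
      invFun := labelingShiftMap s n g⁻¹
      left_inv x := by ext; simp [labelingShiftMap]
      right_inv x := by ext; simp [labelingShiftMap]
      continuous_toFun := continuous_labelingShiftMap s n g
      continuous_invFun := continuous_labelingShiftMap s n g⁻¹ }
  map_one' := by ext; simp [labelingShiftMap]
  map_mul' a b := by ext; simp [labelingShiftMap, mul_assoc]

theorem labelingShift_apply_coe (g : Λ) (x : cyclicLabelings s n) :
    (labelingShift s n g x).1 = fun h => x.1 (h * g) :=
  rfl

def labelFiber (i : Fin n) : Set (cyclicLabelings s n) := {x | x.1 1 = i}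

theorem isClopen_labelFiber (i : Fin n) : IsClopen (labelFiber s n i) :=
  (isClopen_discrete {i}).preimage ((continuous_apply 1).comp continuous_subtype_val)

theorem labelFiber_nonempty (hs : ¬IsOfFinOrder s) (i : Fin n) : (labelFiber s n i).Nonempty := by
  obtain ⟨k, hk⟩ := exists_int_cocycle hs
  open Fin.CommRing in
  refine ⟨⟨fun g => (k g : Fin n) + (i - k 1), fun g => ?_⟩, ?_⟩
  · simp only [hk g]; push_cast; ring
  · simp [labelFiber]

theorem semiconj_labelingShift :
    Semiconj (fun x : cyclicLabelings s n => x.1 1) (labelingShift s n s) (· + 1) := fun x => by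
  simpa [labelingShift_apply_coe] using x.2 1

variable (F W : Type*) [TopologicalSpace F] [TopologicalSpace W]

def modelAction :
    Λ →* ((cyclicLabelings s n × F) ⊕ W ≃ₜ (cyclicLabelings s n × F) ⊕ W) where
  toFun g := ((labelingShift s n g).prodCongr (.refl F)).sumCongr (.refl W)
  map_one' := by simp only [map_one]; ext (⟨_, _⟩ | _) <;> rfl
  map_mul' a b := by simp only [map_mul]; ext (⟨_, _⟩ | _) <;> rfl

def modelLabel : (cyclicLabelings s n × F) ⊕ W → Option (Fin n) :=
  Sum.elim (fun p => some (p.1.1 1)) fun _ => none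

theorem semiconj_modelAction :
    Semiconj (modelLabel s n F W) (modelAction s n F W s) (Option.map (· + 1)) := by
  rintro (⟨z, x⟩ | w)
  · exact congrArg some (semiconj_labelingShift s n z)
  · rfl

noncomputable def labelFiberProdHomeomorph (i : Fin n) :
    labelFiber s n i × F ≃ₜ modelLabel s n F W ⁻¹' {some i} :=
  (IsEmbedding.inl.comp
    (IsEmbedding.subtypeVal.prodMap IsEmbedding.id)).toHomeomorph.trans
    (Homeomorph.setCongr (by
      ext (⟨z, x⟩ | w)
      · simp [modelLabel, labelFiber]
      · simp [modelLabel]))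

noncomputable def modelLabelNoneHomeomorph : W ≃ₜ modelLabel s n F W ⁻¹' {none} :=
  IsEmbedding.inr.toHomeomorph.trans
    (Homeomorph.setCongr (by ext (⟨z, x⟩ | w) <;> simp [modelLabel]))

end Model

theorem IsClopen.nonempty_homeomorph_labelFiber_prod {Λ : Type*} [Group Λ] [Countable Λ] {s : Λ}
    (hs : ¬IsOfFinOrder s) {n : ℕ} [NeZero n] {X : Type*} [TopologicalSpace X] [CompactSpace X]
    [MetrizableSpace X] [TotallyDisconnectedSpace X] [PerfectSpace X] {A : Set X}
    (hA : IsClopen A) (hne : A.Nonempty) (i : Fin n) :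
    Nonempty (A ≃ₜ labelFiber s n i × X) := by
  have : CompactSpace A := isCompact_iff_compactSpace.1 hA.isClosed.isCompact
  have : PerfectSpace A := hA.isOpen.perfectSpace
  have : Nonempty A := hne.to_subtype
  have : CompactSpace (labelFiber s n i) :=
    isCompact_iff_compactSpace.1 (isClopen_labelFiber s n i).isClosed.isCompact
  have : Nonempty (labelFiber s n i × X) :=
    ⟨(⟨_, (labelFiber_nonempty s n hs i).some_mem⟩, hne.some)⟩
  obtain ⟨e⟩ := nonempty_homeomorph_cantorSpace A
  obtain ⟨f⟩ := nonempty_homeomorph_cantorSpace (labelFiber s n i × X)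
  exact ⟨e.symm.trans f⟩

theorem exists_cantor_system_cycling_clopens_general
    (Λ : Type*) [Group Λ] [Countable Λ] (s : Λ) (hs : ¬ IsOfFinOrder s)
    (X : Type*) [TopologicalSpace X] [CompactSpace X] [MetrizableSpace X]
    [TotallyDisconnectedSpace X] [PerfectSpace X]
    (n : ℕ) [NeZero n] (U : Fin n → Set X)
    (hclopen : ∀ i, IsClopen (U i)) (hne : ∀ i, (U i).Nonempty)
    (hdisj : Pairwise (Function.onFun Disjoint U)) :
    ∃ α : Λ →* (X ≃ₜ X), ∀ i : Fin n, α s '' U i = U (i + 1) := by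
  have hpieces := isClopen_preimage_pieceIndex hclopen hdisj
  set W := pieceIndex U ⁻¹' {none}
  let e : ∀ o, pieceIndex U ⁻¹' {o} ≃ₜ modelLabel s n X W ⁻¹' {o}
    | none => modelLabelNoneHomeomorph s n X W
    | some i => ((hpieces (some i)).nonempty_homeomorph_labelFiber_prod hs
        (by rw [preimage_pieceIndex_some hdisj]; exact hne i) i).some.trans
        (labelFiberProdHomeomorph s n X W i)
  obtain ⟨Φ, hΦ⟩ := exists_homeomorph_comp_eq (fun o => (hpieces o).isClosed) e
  refine ⟨Φ.conjHom.comp (modelAction s n X W), fun i => ?_⟩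
  have hsemi := Homeomorph.semiconj_conjHom hΦ (semiconj_modelAction s n X W)
  rw [← preimage_pieceIndex_some hdisj, MonoidHom.comp_apply,
    hsemi.image_preimage_singleton (Homeomorph.surjective _)
      (Option.map_injective (add_left_injective 1)),
    Option.map_some, preimage_pieceIndex_some hdisj]

/-- Let `Λ` be a countable group and `s ∈ Λ` of infinite order. For any finite family
`U 0, …, U (n-1)` of pairwise disjoint nonempty proper clopen subsets of the Cantor
set `X`, there is an action `α : Λ → Homeo(X)` with `α s (U i) = U (i+1)` for all `i`
(indices cyclically, i.e. in `Fin n`). -/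
theorem exists_cantor_system_cycling_clopens
    (Λ : Type*) [Group Λ] [Countable Λ] (s : Λ) (hs : ¬ IsOfFinOrder s)
    (X : Type*) [TopologicalSpace X] [CompactSpace X] [MetrizableSpace X]
    [TotallyDisconnectedSpace X] [PerfectSpace X] [Nonempty X]
    (n : ℕ) [NeZero n] (U : Fin n → Set X)
    (hclopen : ∀ i, IsClopen (U i)) (hne : ∀ i, (U i).Nonempty)
    (hproper : ∀ i, U i ≠ Set.univ) (hdisj : Pairwise (Function.onFun Disjoint U)) :
    ∃ α : Λ →* (X ≃ₜ X), ∀ i : Fin n, α s '' U i = U (i + 1) :=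
  exists_cantor_system_cycling_clopens_general Λ s hs X n U hclopen hne hdisj
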